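/- arXiv:1503.00941 — 6 statements merged into one kernel-verified Lean document; each statement's English description precedes it below -/
import Mathlib

section
/- For every set N of n agents (n ≥ 1) with additive valuations v_1, …, v_n over a finite set M of indivisible goods, there exists a partition (S_1, …, S_n) of M into n pairwise disjoint bundles such that v_i(S_i) ≥ (1/2) · μ_i(n, M) for every agent i. -/
/-!
Aim at `τ i = μ_i / 2` for every agent. While some agent values a single good at least `τ i`,
give her that good: this lowers no other agent's maximin share, because dropping the bundle
containing the good from an optimal partition for `r + 1` bundles leaves `r` disjoint bundles of
the remaining goods. Once every good is worth less than `τ i` to every remaining agent `i`, and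
there are `r` of them, each values the remaining goods at least `r μ_i ≥ 2 r τ_i`. Bag filling
finishes: a smallest bag worth `τ` to somebody loses all that worth when any one good is removed,
so it is worth less than `2 τ` to everyone, and handing it out preserves the invariant with
`r - 1` agents.
-/

/-- `P` is a partition of the finite set `S` of goods into `n`
(possibly empty) pairwise disjoint bundles. -/
def IsPartition {ι : Type*} [DecidableEq ι] (n : ℕ) (S : Finset ι)
    (P : Fin n → Finset ι) : Prop :=
  (∀ i j : Fin n, i ≠ j → Disjoint (P i) (P j)) ∧ Finset.univ.biUnion P = S

/-- The `n`-maximin share of an agent with additive valuation given by item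
values `v` with respect to the finite set `S` of goods:
`μ(n, S) = max over partitions of S into n bundles of the minimum bundle value`. -/
noncomputable def mms {ι : Type*} [DecidableEq ι] (n : ℕ) (S : Finset ι)
    (v : ι → ℝ) : ℝ :=
  sSup {x : ℝ | ∃ P : Fin n → Finset ι,
    IsPartition n S P ∧ x = ⨅ j : Fin n, (P j).sum v}

open Finset Function

section MaximinShare

variable {ι : Type*} [DecidableEq ι] {n : ℕ} {S : Finset ι} {v : ι → ℝ}

theorem IsPartition.subset {P : Fin n → Finset ι} (h : IsPartition n S P) (i : Fin n) :
    P i ⊆ S :=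
  h.2 ▸ subset_biUnion_of_mem P (mem_univ i)

theorem IsPartition.sum_eq {P : Fin n → Finset ι} (h : IsPartition n S P) :
    S.sum v = ∑ i, (P i).sum v := by
  rw [← h.2, sum_biUnion fun i _ j _ hij => h.1 i j hij]

theorem exists_isPartition_of_pairwise_disjoint (hn : 0 < n) {P : Fin n → Finset ι}
    (hP : Pairwise (Disjoint on P)) (hPS : ∀ i, P i ⊆ S) :
    ∃ Q : Fin n → Finset ι, IsPartition n S Q ∧ ∀ i, P i ⊆ Q i := by
  set L := S \ univ.biUnion P
  have hL : ∀ i, Disjoint L (P i) := fun i =>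
    sdiff_disjoint.mono_right (subset_biUnion_of_mem P (mem_univ i))
  set Q := update P ⟨0, hn⟩ (P ⟨0, hn⟩ ∪ L)
  have hPQ : ∀ i, P i ⊆ Q i := fun i => by
    rcases eq_or_ne i ⟨0, hn⟩ with rfl | hi
    · simp [Q]
    · simp [Q, update_of_ne hi]
  refine ⟨Q, ⟨fun i j hij => ?_, Subset.antisymm ?_ fun x hx => ?_⟩, hPQ⟩
  · rcases eq_or_ne i ⟨0, hn⟩ with rfl | hi <;> rcases eq_or_ne j ⟨0, hn⟩ with rfl | hj
    · exact absurd rfl hij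
    · simpa [Q, update_of_ne hj] using ⟨hP hij, hL j⟩
    · simpa [Q, update_of_ne hi] using ⟨hP hij, (hL i).symm⟩
    · simpa [Q, update_of_ne hi, update_of_ne hj] using hP hij
  · refine biUnion_subset.2 fun i _ => ?_
    rcases eq_or_ne i ⟨0, hn⟩ with rfl | hi
    · simpa [Q] using union_subset (hPS _) sdiff_subset
    · simpa [Q, update_of_ne hi] using hPS i
  · by_cases hxP : x ∈ univ.biUnion P
    · obtain ⟨i, -, hi⟩ := mem_biUnion.1 hxP
      exact mem_biUnion.2 ⟨i, mem_univ i, hPQ i hi⟩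
    · exact mem_biUnion.2 ⟨⟨0, hn⟩, mem_univ _, by simp [Q, L, hx, hxP]⟩

theorem finite_mms_set (n : ℕ) (S : Finset ι) (v : ι → ℝ) :
    {x : ℝ | ∃ P : Fin n → Finset ι, IsPartition n S P ∧ x = ⨅ j, (P j).sum v}.Finite := by
  refine ((Set.Finite.pi' fun _ => S.powerset.finite_toSet).image
    fun P : Fin n → Finset ι => ⨅ j, (P j).sum v).subset ?_
  rintro x ⟨P, hP, rfl⟩
  exact ⟨P, fun i => mem_powerset.2 (hP.subset i), rfl⟩

theorem le_mms (hn : 0 < n) {P : Fin n → Finset ι} (hP : IsPartition n S P) {x : ℝ}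
    (hx : ∀ i, x ≤ (P i).sum v) : x ≤ mms n S v :=
  haveI : Nonempty (Fin n) := ⟨⟨0, hn⟩⟩
  (le_ciInf hx).trans (le_csSup (finite_mms_set n S v).bddAbove ⟨P, hP, rfl⟩)

theorem le_mms_of_pairwise_disjoint (hn : 0 < n) (hv : ∀ j ∈ S, 0 ≤ v j)
    {P : Fin n → Finset ι} (hP : Pairwise (Disjoint on P)) (hPS : ∀ i, P i ⊆ S) {x : ℝ}
    (hx : ∀ i, x ≤ (P i).sum v) : x ≤ mms n S v := by
  obtain ⟨Q, hQ, hPQ⟩ := exists_isPartition_of_pairwise_disjoint hn hP hPS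
  exact le_mms hn hQ fun i => (hx i).trans <|
    sum_le_sum_of_subset_of_nonneg (hPQ i) fun j hj _ => hv j (hQ.subset i hj)

theorem mms_nonneg (hn : 0 < n) (hv : ∀ j ∈ S, 0 ≤ v j) : 0 ≤ mms n S v :=
  le_mms_of_pairwise_disjoint hn hv (P := fun _ => ∅) (fun _ _ _ => disjoint_bot_left)
    (fun _ => empty_subset S) fun _ => sum_empty.ge

theorem exists_isPartition_mms_le (hn : 0 < n) (S : Finset ι) (v : ι → ℝ) :
    ∃ P : Fin n → Finset ι, IsPartition n S P ∧ ∀ i, mms n S v ≤ (P i).sum v := by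
  obtain ⟨P, hP, -⟩ := exists_isPartition_of_pairwise_disjoint hn (S := S)
    (P := fun _ => ∅) (fun _ _ _ => disjoint_bot_left) fun _ => empty_subset S
  obtain ⟨Q, hQ, hmms⟩ : mms n S v ∈ {x : ℝ | ∃ P : Fin n → Finset ι, IsPartition n S P ∧
      x = ⨅ j, (P j).sum v} :=
    Set.Nonempty.csSup_mem ⟨_, P, hP, rfl⟩ (finite_mms_set n S v)
  exact ⟨Q, hQ, fun i => hmms ▸ ciInf_le (Finite.bddBelow_range _) i⟩

theorem card_mul_mms_le_sum (hn : 0 < n) (S : Finset ι) (v : ι → ℝ) :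
    n * mms n S v ≤ S.sum v := by
  obtain ⟨P, hP, hmms⟩ := exists_isPartition_mms_le hn S v
  calc n * mms n S v = ∑ _i : Fin n, mms n S v := by simp
    _ ≤ ∑ i, (P i).sum v := sum_le_sum fun i _ => hmms i
    _ = S.sum v := hP.sum_eq.symm

theorem mms_succ_le_mms_erase (hn : 0 < n) (hv : ∀ j ∈ S, 0 ≤ v j) {j : ι} (hj : j ∈ S) :
    mms (n + 1) S v ≤ mms n (S.erase j) v := by
  obtain ⟨P, hP, hmms⟩ := exists_isPartition_mms_le n.succ_pos S v
  obtain ⟨k, -, hjk⟩ := mem_biUnion.1 (hP.2 ▸ hj)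
  refine le_mms_of_pairwise_disjoint hn (fun i hi => hv i (mem_of_mem_erase hi))
    (fun i i' hii' => hP.1 _ _ (k.succAbove_right_injective.ne hii')) (fun i => ?_)
    fun i => hmms _
  intro x hx
  refine mem_erase.2 ⟨?_, hP.subset _ hx⟩
  rintro rfl
  exact disjoint_left.1 (hP.1 _ _ (k.succAbove_ne i)) hx hjk

end MaximinShare

section Allocation

variable {α ι : Type*}

/-- The bundles need not exhaust `R`: leftover goods are handed out only at the very end. -/
def ThresholdsAchievable (A : Finset α) (R : Finset ι) (v : α → ι → ℝ) (τ : α → ℝ) : Prop :=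
  ∃ P : α → Finset ι, (A : Set α).PairwiseDisjoint P ∧ (∀ k ∈ A, P k ⊆ R) ∧
    ∀ k ∈ A, τ k ≤ (P k).sum (v k)

variable {A : Finset α} {R : Finset ι} {v : α → ι → ℝ} {τ : α → ℝ}

theorem thresholdsAchievable_empty : ThresholdsAchievable ∅ R v τ :=
  ⟨fun _ => ∅, by simp, by simp, by simp⟩

theorem ThresholdsAchievable.of_erase [DecidableEq α] [DecidableEq ι] {k : α} {S : Finset ι}
    (hSR : S ⊆ R) (hkS : τ k ≤ S.sum (v k)) (h : ThresholdsAchievable (A.erase k) (R \ S) v τ) :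
    ThresholdsAchievable A R v τ := by
  obtain ⟨P, hdisj, hsub, hval⟩ := h
  have hA : ∀ i ∈ A, k ≠ i → i ∈ A.erase k := fun i hi hki => mem_erase.2 ⟨hki.symm, hi⟩
  have hS : ∀ i ∈ A, k ≠ i → Disjoint S (P i) := fun i hi hki =>
    disjoint_sdiff.mono_right (hsub i (hA i hi hki))
  refine ⟨update P k S, fun i hi j hj hij => ?_, fun i hi => ?_, fun i hi => ?_⟩
  · rcases eq_or_ne k i with rfl | hki <;> rcases eq_or_ne k j with rfl | hkj
    · exact absurd rfl hij
    · simpa [onFun, update_of_ne hkj.symm] using hS j hj hkj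
    · simpa [onFun, update_of_ne hki.symm] using (hS i hi hki).symm
    · simpa [onFun, update_of_ne hki.symm, update_of_ne hkj.symm] using
        hdisj (hA i hi hki) (hA j hj hkj) hij
  · rcases eq_or_ne k i with rfl | hki
    · simpa using hSR
    · simpa [update_of_ne hki.symm] using (hsub i (hA i hi hki)).trans sdiff_subset
  · rcases eq_or_ne k i with rfl | hki
    · simpa using hkS
    · simpa [update_of_ne hki.symm] using hval i (hA i hi hki)

theorem exists_bag_of_small_items (hτ : ∀ k ∈ A, 0 ≤ τ k)
    (hsmall : ∀ k ∈ A, ∀ j ∈ R, v k j < τ k) (hR : ∃ k ∈ A, τ k ≤ R.sum (v k)) :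
    ∃ S ⊆ R, ∃ k ∈ A, τ k ≤ S.sum (v k) ∧ ∀ m ∈ A, S.sum (v m) ≤ 2 * τ m := by
  classical
  set F := R.powerset.filter fun S => ∃ k ∈ A, τ k ≤ S.sum (v k)
  obtain ⟨S, hSF, hmin⟩ := F.exists_min_image card ⟨R, by simpa [F] using hR⟩
  obtain ⟨hSR, k, hk, hkS⟩ : S ⊆ R ∧ ∃ k ∈ A, τ k ≤ S.sum (v k) := by simpa [F] using hSF
  refine ⟨S, hSR, k, hk, hkS, fun m hm => ?_⟩
  rcases S.eq_empty_or_nonempty with rfl | ⟨j, hj⟩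
  · simpa using hτ m hm
  have herase : S.erase j ∉ F := fun h => (card_erase_lt_of_mem hj).not_ge (hmin _ h)
  have hlt : (S.erase j).sum (v m) < τ m := by
    by_contra! hge
    exact herase (mem_filter.2 ⟨mem_powerset.2 ((erase_subset j S).trans hSR), m, hm, hge⟩)
  rw [← sum_erase_add S (v m) hj]
  linarith [hsmall m hm j (hSR hj)]

theorem thresholdsAchievable_of_small_items [DecidableEq α] [DecidableEq ι]
    (hτ : ∀ k ∈ A, 0 ≤ τ k) (hsmall : ∀ k ∈ A, ∀ j ∈ R, v k j < τ k)
    (htotal : ∀ k ∈ A, 2 * #A * τ k ≤ R.sum (v k)) : ThresholdsAchievable A R v τ := by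
  induction A using Finset.strongInduction generalizing R with | H A ih =>
  rcases A.eq_empty_or_nonempty with rfl | ⟨k₀, hk₀⟩
  · exact thresholdsAchievable_empty
  have hR : τ k₀ ≤ R.sum (v k₀) := by
    have hA : (1 : ℝ) ≤ #A := by exact_mod_cast card_pos.2 ⟨k₀, hk₀⟩
    nlinarith [htotal k₀ hk₀, hτ k₀ hk₀]
  obtain ⟨S, hSR, k, hk, hkS, hS⟩ := exists_bag_of_small_items hτ hsmall ⟨k₀, hk₀, hR⟩
  refine .of_erase hSR hkS <| ih _ (erase_ssubset hk) (fun m hm => hτ m (mem_of_mem_erase hm))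
    (fun m hm j hj => hsmall m (mem_of_mem_erase hm) j (mem_sdiff.1 hj).1) fun m hm => ?_
  have hcard : (#(A.erase k) : ℝ) + 1 = #A := by exact_mod_cast card_erase_add_one hk
  have htotal_m := htotal m (mem_of_mem_erase hm)
  rw [← hcard] at htotal_m
  rw [sum_sdiff_eq_sub hSR]
  linarith [hS m (mem_of_mem_erase hm)]

theorem thresholdsAchievable_of_le_mms [DecidableEq α] [DecidableEq ι]
    (hτ : ∀ k ∈ A, 0 ≤ τ k) (hv : ∀ k ∈ A, ∀ j ∈ R, 0 ≤ v k j)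
    (hmms : ∀ k ∈ A, 2 * τ k ≤ mms #A R (v k)) : ThresholdsAchievable A R v τ := by
  induction A using Finset.strongInduction generalizing R with | H A ih =>
  by_cases hbig : ∃ k ∈ A, ∃ j ∈ R, τ k ≤ v k j
  · obtain ⟨k, hk, j, hj, hkj⟩ := hbig
    refine .of_erase (singleton_subset_iff.2 hj) (by simpa using hkj) ?_
    rw [sdiff_singleton_eq_erase]
    refine ih _ (erase_ssubset hk) (fun m hm => hτ m (mem_of_mem_erase hm))
      (fun m hm i hi => hv m (mem_of_mem_erase hm) i (mem_of_mem_erase hi)) fun m hm => ?_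
    have hm' := mem_of_mem_erase hm
    calc 2 * τ m ≤ mms #A R (v m) := hmms m hm'
      _ = mms (#(A.erase k) + 1) R (v m) := by rw [card_erase_add_one hk]
      _ ≤ mms #(A.erase k) (R.erase j) (v m) :=
        mms_succ_le_mms_erase (card_pos.2 ⟨m, hm⟩) (hv m hm') hj
  · push Not at hbig
    refine thresholdsAchievable_of_small_items hτ hbig fun k hk => ?_
    calc 2 * #A * τ k = #A * (2 * τ k) := by ring
      _ ≤ #A * mms #A R (v k) := by gcongr; exact hmms k hk
      _ ≤ R.sum (v k) := card_mul_mms_le_sum (card_pos.2 ⟨k, hk⟩) R (v k)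

end Allocation

/-- for any `n ≥ 1` agents with additive (nonnegative) valuations over a
finite set `M` of goods, there is a partition of `M` giving every agent at least
half of her maximin share. -/
theorem exists_half_mms_allocation {ι : Type*} [DecidableEq ι]
    (n : ℕ) (hn : 1 ≤ n) (M : Finset ι)
    (v : Fin n → ι → ℝ) (hv : ∀ i : Fin n, ∀ j ∈ M, 0 ≤ v i j) :
    ∃ S : Fin n → Finset ι, IsPartition n M S ∧
      ∀ i : Fin n, (1 / 2) * mms n M (v i) ≤ (S i).sum (v i) := by
  obtain ⟨P, hdisj, hPM, hP⟩ :
      ThresholdsAchievable univ M v fun i => mms n M (v i) / 2 :=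
    thresholdsAchievable_of_le_mms (fun i _ => by linarith [mms_nonneg hn (hv i)])
      (fun i _ => hv i) fun i _ => by simp [mul_div_cancel₀]
  obtain ⟨S, hS, hPS⟩ := exists_isPartition_of_pairwise_disjoint hn
    (fun i j hij => hdisj (mem_univ i) (mem_univ j) hij) fun i => hPM i (mem_univ i)
  refine ⟨S, hS, fun i => ?_⟩
  calc 1 / 2 * mms n M (v i) = mms n M (v i) / 2 := by ring
    _ ≤ (P i).sum (v i) := hP i (mem_univ i)
    _ ≤ (S i).sum (v i) :=
      sum_le_sum_of_subset_of_nonneg (hPS i) fun j hj _ => hv i j (hS.subset i hj)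
end

section
/- For every set N of n agents (n ≥ 1) with additive valuations over a finite set M of indivisible goods, there exists a partition (S_1, …, S_n) of M into n pairwise disjoint bundles such that for every agent i, v_i(S_i) ≥ (Σ_{j∈M} v_{ij})/n − v_max, and consequently v_i(S_i) ≥ μ_i(n, M) − v_max, where v_max = max_{i∈N, j∈M} v_{ij}. Such a partition is produced by the Greedy Round-Robin algorithm. -/
open Classical in
/-- One full run of the Greedy Round-Robin algorithm, starting from the set `R` of
currently unallocated items, with the agent `t % n` to move (agents move in the
cyclic order `0, 1, …, n−1, 0, 1, …`), and current bundles `A`.  On her turn, the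
current agent adds to her bundle a most valuable (according to her own valuation,
ties broken by smallest item) unallocated item, until all items are allocated. -/
noncomputable def greedyAux {ι : Type*} [LinearOrder ι] (n : ℕ) (hn : 0 < n)
    (v : Fin n → ι → ℝ) (R : Finset ι) (t : ℕ) (A : Fin n → Finset ι) :
    Fin n → Finset ι :=
  if h : R.Nonempty then
    let i : Fin n := ⟨t % n, Nat.mod_lt t hn⟩
    have hne : (R.filter fun j => ∀ k ∈ R, v i k ≤ v i j).Nonempty := by
      obtain ⟨j, hj, hmax⟩ := R.exists_max_image (v i) h
      exact ⟨j, Finset.mem_filter.mpr ⟨hj, hmax⟩⟩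
    let j : ι := (R.filter fun j => ∀ k ∈ R, v i k ≤ v i j).min' hne
    greedyAux n hn v (R.erase j) (t + 1) (Function.update A i (insert j (A i)))
  else A
termination_by R.card
decreasing_by
  exact Finset.card_erase_lt_of_mem (Finset.mem_of_mem_filter _ (Finset.min'_mem _ hne))

/-- The bundles produced by the Greedy Round-Robin algorithm on the set `M` of
items, for `n` agents with additive valuations given by the item values `v`. -/
noncomputable def greedyRoundRobin {ι : Type*} [LinearOrder ι] (n : ℕ) (hn : 0 < n)
    (v : Fin n → ι → ℝ) (M : Finset ι) : Fin n → Finset ι :=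
  greedyAux n hn v M 0 fun _ => ∅

theorem IsPartition.update_insert {ι : Type*} [DecidableEq ι] {n : ℕ} {S : Finset ι}
    {P : Fin n → Finset ι} (hP : IsPartition n S P) {j : ι} (hj : j ∉ S) (a : Fin n) :
    IsPartition n (insert j S) (Function.update P a (insert j (P a))) := by
  obtain ⟨hdisj, hcover⟩ := hP
  have hjP : ∀ k, j ∉ P k := fun k hk =>
    hj (hcover ▸ Finset.mem_biUnion.mpr ⟨k, Finset.mem_univ k, hk⟩)
  refine ⟨fun k l hkl => ?_, ?_⟩
  · rcases eq_or_ne k a with rfl | hka <;> rcases eq_or_ne l k with rfl | hlk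
    · exact absurd rfl hkl
    · rw [Function.update_self, Function.update_of_ne hlk, Finset.disjoint_insert_left]
      exact ⟨hjP l, hdisj k l hkl⟩
    · exact absurd rfl hkl
    · rw [Function.update_of_ne hka]
      rcases eq_or_ne l a with rfl | hla
      · rw [Function.update_self, Finset.disjoint_insert_right]
        exact ⟨hjP k, hdisj k l hkl⟩
      · rw [Function.update_of_ne hla]
        exact hdisj k l hkl
  · ext x
    simp only [Finset.mem_biUnion, Finset.mem_univ, true_and, Finset.mem_insert, ← hcover]
    constructor
    · rintro ⟨k, hk⟩
      rcases eq_or_ne k a with rfl | hka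
      · rw [Function.update_self, Finset.mem_insert] at hk
        exact hk.imp_right fun h => ⟨k, h⟩
      · exact Or.inr ⟨k, by rwa [Function.update_of_ne hka] at hk⟩
    · rintro (rfl | ⟨k, hk⟩)
      · exact ⟨a, by simp⟩
      · rcases eq_or_ne k a with rfl | hka
        · exact ⟨k, by simp [hk]⟩
        · exact ⟨k, by rwa [Function.update_of_ne hka]⟩

theorem mms_le_sum_div {ι : Type*} [DecidableEq ι] (n : ℕ) (S : Finset ι) (v : ι → ℝ)
    (hS : 0 ≤ S.sum v) : mms n S v ≤ S.sum v / n := by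
  refine Real.sSup_le ?_ (by positivity)
  rintro x ⟨P, ⟨hdisj, hcover⟩, rfl⟩
  rcases Nat.eq_zero_or_pos n with rfl | hn
  · simp
  have hsum : ∑ k, (P k).sum v = S.sum v := by
    rw [← hcover, Finset.sum_biUnion fun k _ l _ hkl => hdisj k l hkl]
  rw [le_div_iff₀ (by exact_mod_cast hn), ← hsum]
  calc (⨅ k, (P k).sum v) * n = ∑ _k : Fin n, ⨅ k, (P k).sum v := by simp [mul_comm]
    _ ≤ ∑ k, (P k).sum v :=
      Finset.sum_le_sum fun k _ => ciInf_le (Set.finite_range _).bddBelow k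

namespace RoundRobin

section Turns

variable {n : ℕ}

def agentToMove (hn : 0 < n) (t : ℕ) : Fin n := ⟨t % n, Nat.mod_lt t hn⟩

def turnsUntil (n i t : ℕ) : ℕ := if t % n ≤ i then i - t % n else i + n - t % n

theorem turnsUntil_lt {i : ℕ} (hi : i < n) (t : ℕ) : turnsUntil n i t < n := by
  unfold turnsUntil
  split <;> omega

theorem turnsUntil_succ {i t : ℕ} (hi : i < n) (ht : t % n ≠ i) :
    turnsUntil n i (t + 1) + 1 = turnsUntil n i t := by
  have hn1 : 1 < n := by
    by_contra h
    obtain rfl : n = 1 := by omega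
    omega
  have hsucc : (t + 1) % n = if n ≤ t % n + 1 then t % n + 1 - n else t % n + 1 := by
    rw [Nat.add_mod_eq_ite, Nat.mod_eq_of_lt hn1]
  have htn : t % n < n := Nat.mod_lt t (by omega)
  unfold turnsUntil
  rw [hsucc]
  split_ifs <;> omega

end Turns

section Invariant

variable {ι : Type*} {n : ℕ} (v : Fin n → ι → ℝ)

def ShareInvariant (i : Fin n) (C : ℝ) (R : Finset ι) (t : ℕ) (A : Fin n → Finset ι) :
    Prop :=
  Disjoint R (A i) ∧ (∀ k ∈ R, 0 ≤ v i k) ∧ ∃ m, 0 ≤ m ∧ (∀ k ∈ R, v i k ≤ m) ∧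
    C ≤ n * (A i).sum (v i) + R.sum (v i) - turnsUntil n i t * m

variable {v}

theorem ShareInvariant.le_of_empty {i : Fin n} {C : ℝ} {t : ℕ} {A : Fin n → Finset ι}
    (h : ShareInvariant v i C ∅ t A) : C ≤ n * (A i).sum (v i) := by
  obtain ⟨-, -, m, hm, -, hC⟩ := h
  have : 0 ≤ (turnsUntil n i t : ℝ) * m := by positivity
  simp only [Finset.sum_empty] at hC
  linarith

theorem ShareInvariant.step [DecidableEq ι] (hn : 0 < n) {i : Fin n} {C : ℝ} {R : Finset ι}
    {t : ℕ} {A : Fin n → Finset ι} (h : ShareInvariant v i C R t A) {j : ι} (hj : j ∈ R)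
    (hjmax : ∀ k ∈ R, v (agentToMove hn t) k ≤ v (agentToMove hn t) j) :
    ShareInvariant v i C (R.erase j) (t + 1)
      (Function.update A (agentToMove hn t) (insert j (A (agentToMove hn t)))) := by
  obtain ⟨hdisj, hnonneg, m, hm, hmR, hC⟩ := h
  have hjA : j ∉ A i := Finset.disjoint_left.mp hdisj hj
  have hsumR : (R.erase j).sum (v i) = R.sum (v i) - v i j := Finset.sum_erase_eq_sub hj
  have hsub : Function.update A (agentToMove hn t) (insert j (A (agentToMove hn t))) i ⊆
      insert j (A i) := by
    rw [Function.update_apply]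
    split_ifs with hi
    · rw [hi]
    · exact Finset.subset_insert j (A i)
  refine ⟨?_, fun k hk => hnonneg k (Finset.mem_of_mem_erase hk), ?_⟩
  · refine Finset.disjoint_of_subset_right hsub (Finset.disjoint_insert_right.mpr ?_)
    exact ⟨Finset.notMem_erase j R, Finset.disjoint_of_subset_left (R.erase_subset j) hdisj⟩
  rcases eq_or_ne (agentToMove hn t) i with rfl | hturn
  · refine ⟨v (agentToMove hn t) j, hnonneg j hj,
      fun k hk => hjmax k (Finset.mem_of_mem_erase hk), ?_⟩
    rw [Function.update_self, Finset.sum_insert hjA, hsumR]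
    have hd : (turnsUntil n (agentToMove hn t) (t + 1) : ℝ) ≤ n - 1 := by
      rw [le_sub_iff_add_le]
      exact_mod_cast turnsUntil_lt (agentToMove hn t).isLt (t + 1)
    have := mul_le_mul_of_nonneg_right hd (hnonneg j hj)
    have : 0 ≤ (turnsUntil n (agentToMove hn t) t : ℝ) * m := by positivity
    linarith
  · refine ⟨m, hm, fun k hk => hmR k (Finset.mem_of_mem_erase hk), ?_⟩
    rw [Function.update_of_ne hturn.symm, hsumR]
    have hd : (turnsUntil n i (t + 1) : ℝ) + 1 = turnsUntil n i t := by
      exact_mod_cast turnsUntil_succ i.isLt fun h => hturn (Fin.ext h)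
    rw [← hd] at hC
    linarith [hmR j hj]

end Invariant

variable {ι : Type*} [LinearOrder ι] {n : ℕ} (hn : 0 < n)

open Classical in
noncomputable def bestItem (w : ι → ℝ) (R : Finset ι) (hR : R.Nonempty) : ι :=
  (R.filter fun j => ∀ k ∈ R, w k ≤ w j).min' (by
    obtain ⟨j, hj, hmax⟩ := R.exists_max_image w hR
    exact ⟨j, Finset.mem_filter.mpr ⟨hj, hmax⟩⟩)

theorem bestItem_spec (w : ι → ℝ) (R : Finset ι) (hR : R.Nonempty) :
    bestItem w R hR ∈ R ∧ ∀ k ∈ R, w k ≤ w (bestItem w R hR) := by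
  classical
  exact Finset.mem_filter.mp (Finset.min'_mem _ _)

variable (v : Fin n → ι → ℝ)

theorem greedyAux_of_nonempty (R : Finset ι) (t : ℕ) (A : Fin n → Finset ι)
    (hR : R.Nonempty) :
    greedyAux n hn v R t A =
      greedyAux n hn v (R.erase (bestItem (v (agentToMove hn t)) R hR)) (t + 1)
        (Function.update A (agentToMove hn t)
          (insert (bestItem (v (agentToMove hn t)) R hR) (A (agentToMove hn t)))) := by
  rw [greedyAux, dif_pos hR]
  rfl

theorem greedyAux_empty (t : ℕ) (A : Fin n → Finset ι) : greedyAux n hn v ∅ t A = A := by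
  rw [greedyAux, dif_neg Finset.not_nonempty_empty]

theorem greedyAux_induction (P : Finset ι → ℕ → (Fin n → Finset ι) → Prop)
    (step : ∀ R t A, ∀ j ∈ R, (∀ k ∈ R, v (agentToMove hn t) k ≤ v (agentToMove hn t) j) →
      P R t A → P (R.erase j) (t + 1)
        (Function.update A (agentToMove hn t) (insert j (A (agentToMove hn t)))))
    (R : Finset ι) (t : ℕ) (A : Fin n → Finset ι) (h : P R t A) :
    ∃ t', P ∅ t' (greedyAux n hn v R t A) := by
  by_cases hR : R.Nonempty
  · obtain ⟨hjR, hjmax⟩ := bestItem_spec (v (agentToMove hn t)) R hR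
    rw [greedyAux_of_nonempty hn v R t A hR]
    exact greedyAux_induction P step _ _ _ (step R t A _ hjR hjmax h)
  · obtain rfl := Finset.not_nonempty_iff_eq_empty.mp hR
    exact ⟨t, by rwa [greedyAux_empty]⟩
termination_by R.card
decreasing_by exact Finset.card_erase_lt_of_mem (bestItem_spec _ R hR).1

variable (M : Finset ι)

theorem isPartition_greedyRoundRobin : IsPartition n M (greedyRoundRobin n hn v M) := by
  obtain ⟨_, -, hP⟩ := greedyAux_induction hn v
    (fun R _ A => R ⊆ M ∧ IsPartition n (M \ R) A)
    (fun R _ A j hj _ ⟨hRM, hP⟩ => ⟨(R.erase_subset j).trans hRM, by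
      rw [Finset.sdiff_erase (hRM hj)]
      exact hP.update_insert (fun h => (Finset.mem_sdiff.mp h).2 hj) _⟩)
    M 0 (fun _ => ∅) ⟨subset_rfl, fun _ _ _ => Finset.disjoint_empty_left ∅, by ext; simp⟩
  rwa [Finset.sdiff_empty] at hP

theorem sum_div_sub_le_sum_greedyRoundRobin {vmax : ℝ} (hvmax : 0 ≤ vmax) (i : Fin n)
    (hv : ∀ j ∈ M, 0 ≤ v i j) (hub : ∀ j ∈ M, v i j ≤ vmax) :
    M.sum (v i) / n - vmax ≤ (greedyRoundRobin n hn v M i).sum (v i) := by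
  have hstart : ShareInvariant v i (M.sum (v i) - n * vmax) M 0 fun _ => ∅ := by
    refine ⟨Finset.disjoint_empty_right M, hv, vmax, hvmax, hub, ?_⟩
    have hd : (turnsUntil n i 0 : ℝ) ≤ n := by exact_mod_cast (turnsUntil_lt i.isLt 0).le
    have := mul_le_mul_of_nonneg_right hd hvmax
    simp only [Finset.sum_empty, mul_zero, zero_add]
    linarith
  obtain ⟨_, hend⟩ := greedyAux_induction hn v _ (fun _ _ _ _ hj hjmax h => h.step hn hj hjmax)
    M 0 _ hstart
  rw [greedyRoundRobin, sub_le_iff_le_add, div_le_iff₀ (by exact_mod_cast hn)]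
  linarith [hend.le_of_empty]

end RoundRobin

open RoundRobin in
theorem greedy_round_robin_additive_approx_general {ι : Type*} [LinearOrder ι]
    (n : ℕ) (hn : 0 < n) (M : Finset ι)
    (v : Fin n → ι → ℝ) (hv : ∀ i : Fin n, ∀ j ∈ M, 0 ≤ v i j)
    (vmax : ℝ) (hub : ∀ i : Fin n, ∀ j ∈ M, v i j ≤ vmax)
    (hattained : ∃ i : Fin n, ∃ j ∈ M, v i j = vmax) :
    IsPartition n M (greedyRoundRobin n hn v M) ∧
      ∀ i : Fin n,
        M.sum (v i) / n - vmax ≤ (greedyRoundRobin n hn v M i).sum (v i) ∧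
        mms n M (v i) - vmax ≤ (greedyRoundRobin n hn v M i).sum (v i) := by
  have hvmax : 0 ≤ vmax := by
    obtain ⟨i, j, hj, rfl⟩ := hattained
    exact hv i j hj
  refine ⟨isPartition_greedyRoundRobin hn v M, fun i => ?_⟩
  have hshare := sum_div_sub_le_sum_greedyRoundRobin hn v M hvmax i (hv i) (hub i)
  have hmms := mms_le_sum_div n M (v i) (Finset.sum_nonneg (hv i))
  exact ⟨hshare, by linarith⟩

/-- the Greedy Round-Robin algorithm produces a partition of `M` in
which every agent `i` receives value at least `(Σ_{j∈M} v_{ij})/n − v_max`, hence at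
least `μ_i(n, M) − v_max`, where `v_max = max_{i∈N, j∈M} v_{ij}`. -/
theorem greedy_round_robin_additive_approx {ι : Type*} [LinearOrder ι]
    (n : ℕ) (hn : 0 < n) (M : Finset ι) (hM : M.Nonempty)
    (v : Fin n → ι → ℝ) (hv : ∀ i : Fin n, ∀ j ∈ M, 0 ≤ v i j)
    (vmax : ℝ) (hub : ∀ i : Fin n, ∀ j ∈ M, v i j ≤ vmax)
    (hattained : ∃ i : Fin n, ∃ j ∈ M, v i j = vmax) :
    IsPartition n M (greedyRoundRobin n hn v M) ∧
      ∀ i : Fin n,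
        M.sum (v i) / n - vmax ≤ (greedyRoundRobin n hn v M i).sum (v i) ∧
        mms n M (v i) - vmax ≤ (greedyRoundRobin n hn v M i).sum (v i) :=
  greedy_round_robin_additive_approx_general n hn M v hv vmax hub hattained
end

section
/- Let (S_1, …, S_n) be the partition of M produced by the Greedy Round-Robin algorithm for n agents with additive valuations. Then for every pair of agents i, j it holds that v_i(S_i) ≥ v_i(S_j) − v_max, where v_max = max_{i∈N, j∈M} v_{ij}. -/
/-! Match each pick of agent `j` with the last pick of agent `i` before it: `i` took her item
while `j`'s was still available, so she values hers at least as much. Only `j`'s first pick is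
unmatched, when `j` moves before `i`, and it is worth at most `v_max` to `i`. Along the recursion
of the algorithm this becomes an invariant on the gains of `i` and `j` from turn `t` on, with `B`
bounding `i`'s value of every unallocated item. -/

open Finset Function

namespace GreedyRoundRobin

variable {n : ℕ}

/-- The number of turns from turn `t` on before agent `i` moves (`0` if she moves at `t`). -/
def turnsUntil (t : ℕ) (i : Fin n) : ℕ := (i + n - t % n) % n

lemma turnsUntil_lt (t : ℕ) (i : Fin n) : turnsUntil t i < n :=
  Nat.mod_lt _ (Nat.zero_lt_of_lt i.isLt)

lemma add_turnsUntil_mod (t : ℕ) (i : Fin n) : (t + turnsUntil t i) % n = i := by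
  have hi := i.isLt
  have ht : t % n < n := Nat.mod_lt t (by omega)
  have hdiv := Nat.div_add_mod t n
  rw [turnsUntil, Nat.add_mod_mod,
    show t + (i + n - t % n) = i + n * (t / n + 1) by rw [Nat.mul_succ]; omega,
    Nat.add_mul_mod_self_left, Nat.mod_eq_of_lt hi]

lemma turnsUntil_eq_of_add_mod {t w : ℕ} {i : Fin n} (hw : w < n) (h : (t + w) % n = i) :
    turnsUntil t i = w := by
  have hmod : t + turnsUntil t i ≡ t + w [MOD n] := (add_turnsUntil_mod t i).trans h.symm
  have := Nat.ModEq.add_left_cancel' t hmod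
  rwa [Nat.ModEq, Nat.mod_eq_of_lt (turnsUntil_lt t i), Nat.mod_eq_of_lt hw] at this

lemma turnsUntil_eq_zero_iff {t : ℕ} {i : Fin n} : turnsUntil t i = 0 ↔ (i : ℕ) = t % n := by
  refine ⟨fun h => ?_, fun h => turnsUntil_eq_of_add_mod (Nat.zero_lt_of_lt i.isLt) h.symm⟩
  simpa [h] using (add_turnsUntil_mod t i).symm

lemma turnsUntil_succ_add_one {t : ℕ} {i : Fin n} (hi : (i : ℕ) ≠ t % n) :
    turnsUntil (t + 1) i + 1 = turnsUntil t i := by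
  have hpos : turnsUntil t i ≠ 0 := mt turnsUntil_eq_zero_iff.mp hi
  have hlt := turnsUntil_lt t i
  rw [turnsUntil_eq_of_add_mod (w := turnsUntil t i - 1) (by omega)]
  · omega
  · rw [show t + 1 + (turnsUntil t i - 1) = t + turnsUntil t i by omega, add_turnsUntil_mod]

lemma turnsUntil_succ_le {t : ℕ} {c : Fin n} (hc : (c : ℕ) = t % n) (i : Fin n) :
    turnsUntil (t + 1) i ≤ turnsUntil (t + 1) c := by
  have hn : 0 < n := Nat.zero_lt_of_lt i.isLt
  rw [turnsUntil_eq_of_add_mod (i := c) (w := n - 1) (by omega)]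
  · exact Nat.le_sub_one_of_lt (turnsUntil_lt _ i)
  · rw [show t + 1 + (n - 1) = t + n by omega, Nat.add_mod_right, hc]

variable {ι : Type*} [LinearOrder ι] (hn : 0 < n) (v : Fin n → ι → ℝ)

lemma greedyAux_empty (t : ℕ) (A : Fin n → Finset ι) : greedyAux n hn v ∅ t A = A := by
  rw [greedyAux, dif_neg (not_nonempty_empty (α := ι))]

lemma greedyAux_of_nonempty {R : Finset ι} (hR : R.Nonempty) {t : ℕ} (A : Fin n → Finset ι)
    {c : Fin n} (hc : (c : ℕ) = t % n) :
    ∃ g ∈ R, (∀ r ∈ R, v c r ≤ v c g) ∧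
      greedyAux n hn v R t A =
        greedyAux n hn v (R.erase g) (t + 1) (update A c (insert g (A c))) := by
  obtain rfl : c = ⟨t % n, Nat.mod_lt t hn⟩ := Fin.ext hc
  rw [greedyAux, dif_pos hR]
  generalize_proofs _ hne
  exact ⟨_, (mem_filter.mp (min'_mem _ hne)).1, (mem_filter.mp (min'_mem _ hne)).2, rfl⟩

theorem greedyAux_envy_le (i j : Fin n) (R : Finset ι) (t : ℕ) (A : Fin n → Finset ι)
    (hA : ∀ k, Disjoint R (A k)) {B : ℝ} (hB : 0 ≤ B) (hRB : ∀ r ∈ R, 0 ≤ v i r ∧ v i r ≤ B) :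
    (greedyAux n hn v R t A j).sum (v i) - (A j).sum (v i) ≤
      (greedyAux n hn v R t A i).sum (v i) - (A i).sum (v i) +
        if turnsUntil t i ≤ turnsUntil t j then 0 else B := by
  rcases R.eq_empty_or_nonempty with rfl | hR
  · rw [greedyAux_empty]
    split_ifs <;> linarith
  obtain ⟨c, hc⟩ : ∃ c : Fin n, (c : ℕ) = t % n := ⟨⟨t % n, Nat.mod_lt t hn⟩, rfl⟩
  obtain ⟨g, hgR, hg_max, hstep⟩ := greedyAux_of_nonempty hn v hR A hc
  set A' := update A c (insert g (A c))
  have hA'_self : A' c = insert g (A c) := update_self ..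
  have hA'_of_ne {k : Fin n} (hk : k ≠ c) : A' k = A k := update_of_ne hk _ _
  have hA' : ∀ k, Disjoint (R.erase g) (A' k) := by
    intro k
    rcases eq_or_ne k c with rfl | hk
    · rw [hA'_self]
      exact disjoint_insert_right.mpr ⟨notMem_erase g R, (hA k).mono_left (erase_subset g R)⟩
    · rw [hA'_of_ne hk]
      exact (hA k).mono_left (erase_subset g R)
  have hA'c : (A' c).sum (v i) = v i g + (A c).sum (v i) := by
    rw [hA'_self, sum_insert (disjoint_left.mp (hA c) hgR)]
  have IH {B' : ℝ} (hB' : 0 ≤ B') (hRB' : ∀ r ∈ R.erase g, 0 ≤ v i r ∧ v i r ≤ B') :=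
    greedyAux_envy_le i j (R.erase g) (t + 1) A' hA' hB' hRB'
  rw [hstep]
  rcases eq_or_ne i j with rfl | hij
  · simp
  rcases eq_or_ne i c with rfl | hic
  · -- `i` moves now: everything left is worth at most her pick `g` to her.
    have hgain := IH (hRB g hgR).1 fun r hr =>
      ⟨(hRB r (mem_of_mem_erase hr)).1, hg_max r (mem_of_mem_erase hr)⟩
    rw [if_pos (by simp [turnsUntil_eq_zero_iff.mpr hc]), ← hA'_of_ne hij.symm]
    split_ifs at hgain <;> linarith [(hRB g hgR).1]
  rcases eq_or_ne j c with rfl | hjc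
  · have hgain := IH hB fun r hr => hRB r (mem_of_mem_erase hr)
    rw [if_pos (turnsUntil_succ_le hc i)] at hgain
    have hji : ¬turnsUntil t i ≤ turnsUntil t j := by
      rw [turnsUntil_eq_zero_iff.mpr hc, Nat.le_zero, turnsUntil_eq_zero_iff, ← hc]
      exact Fin.val_ne_of_ne hic
    rw [if_neg hji, ← hA'_of_ne hic]
    linarith [(hRB g hgR).2]
  · have hgain := IH hB fun r hr => hRB r (mem_of_mem_erase hr)
    have hi : (i : ℕ) ≠ t % n := hc ▸ Fin.val_ne_of_ne hic
    have hj : (j : ℕ) ≠ t % n := hc ▸ Fin.val_ne_of_ne hjc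
    have hiff : turnsUntil t i ≤ turnsUntil t j ↔ turnsUntil (t + 1) i ≤ turnsUntil (t + 1) j := by
      rw [← turnsUntil_succ_add_one hi, ← turnsUntil_succ_add_one hj]
      omega
    simp only [hiff]
    rwa [← hA'_of_ne hic, ← hA'_of_ne hjc]
termination_by R.card
decreasing_by exact card_erase_lt_of_mem hgR

end GreedyRoundRobin

theorem greedy_round_robin_bounded_envy_general {ι : Type*} [LinearOrder ι]
    (n : ℕ) (hn : 0 < n) (M : Finset ι) (hM : M.Nonempty)
    (v : Fin n → ι → ℝ) (hv : ∀ i : Fin n, ∀ j ∈ M, 0 ≤ v i j)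
    (vmax : ℝ) (hub : ∀ i : Fin n, ∀ j ∈ M, v i j ≤ vmax)
    (S : Fin n → Finset ι) (hS : S = greedyRoundRobin n hn v M) :
    ∀ i j : Fin n, (S j).sum (v i) - vmax ≤ (S i).sum (v i) := by
  subst hS
  intro i j
  have hvmax : 0 ≤ vmax := by
    obtain ⟨r, hr⟩ := hM
    exact (hv i r hr).trans (hub i r hr)
  have henvy := GreedyRoundRobin.greedyAux_envy_le hn v i j M 0 (fun _ => ∅)
    (fun _ => disjoint_empty_right M) hvmax fun r hr => ⟨hv i r hr, hub i r hr⟩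
  simp only [sum_empty, sub_zero] at henvy
  rw [greedyRoundRobin]
  split_ifs at henvy <;> linarith

/-- in the allocation `(S 0, …, S (n−1))` produced by the Greedy
Round-Robin algorithm, every agent `i` envies any agent `j` by at most `v_max`:
`v_i(S i) ≥ v_i(S j) − v_max`, where `v_max = max_{i∈N, j∈M} v_{ij}`. -/
theorem greedy_round_robin_bounded_envy {ι : Type*} [LinearOrder ι]
    (n : ℕ) (hn : 0 < n) (M : Finset ι) (hM : M.Nonempty)
    (v : Fin n → ι → ℝ) (hv : ∀ i : Fin n, ∀ j ∈ M, 0 ≤ v i j)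
    (vmax : ℝ) (hub : ∀ i : Fin n, ∀ j ∈ M, v i j ≤ vmax)
    (hattained : ∃ i : Fin n, ∃ j ∈ M, v i j = vmax)
    (S : Fin n → Finset ι) (hS : S = greedyRoundRobin n hn v M) :
    ∀ i j : Fin n, (S j).sum (v i) - vmax ≤ (S i).sum (v i) :=
  greedy_round_robin_bounded_envy_general n hn M hM v hv vmax hub S hS
end

section
/- Let G be a finite bipartite graph with vertex parts X and Y, and let B be a maximum matching of G that does not saturate X. Let X_u ⊆ X be the set of X-vertices left unmatched by B, and let X^+ be the union of X_u with the set of all X-vertices reachable from X_u by paths that alternate between non-matching edges (traversed from X to Y) and matching edges of B (traversed from Y to X). Then: (1) every neighbor of X^+ is matched by B, and the X-endpoint of the matching edge at any vertex of Γ(X^+) lies in X^+, so that |X^+ ∩ X_m| = |Γ(X^+)| and |X^+| = |X_u| + |Γ(X^+)| > |Γ(X^+)|, where Γ(X^+) ⊆ Y denotes the set of neighbors of X^+ in G and X_m = X \ X_u; (2) there are no edges of G between X^+ and Y \ Γ(X^+); (3) the restriction of B to X \ X^+ is a perfect matching between X \ X^+ and a subset of Y \ Γ(X^+). -/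
/-- `B` is a matching of the bipartite graph on parts `X`, `Y` with adjacency
relation `E`: a set of pairwise vertex-disjoint edges. -/
def IsMatching {X Y : Type} (E : X → Y → Prop) (B : Finset (X × Y)) : Prop :=
  (∀ p ∈ B, E p.1 p.2) ∧
    (∀ p ∈ B, ∀ q ∈ B, p.1 = q.1 → p = q) ∧
    (∀ p ∈ B, ∀ q ∈ B, p.2 = q.2 → p = q)

/-!
A vertex is free if no edge of `B` meets it. If a neighbour `y` of a vertex `x` reachable from a
free `u` were free, the alternating path from `u` to `x` followed by `xy` would be augmenting,
contradicting maximality of `B` (Berge). So `Γ(X⁺)` is matched, and the `B`-partner of any vertex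
of `Γ(X⁺)` is reachable by one more step; hence `B` is a bijection between `Γ(X⁺)` and the matched
part of `X⁺`, which gives the counts. A vertex outside `X⁺` is matched, and its partner cannot lie
in `Γ(X⁺)`, whose partners all lie in `X⁺`.
-/

theorem Relation.ReflTransGen.exists_isChain_nodup {α : Type*} {r : α → α → Prop} {a b : α}
    (h : Relation.ReflTransGen r a b) :
    ∃ l, (a :: l).IsChain r ∧ (a :: l).Nodup ∧ (a :: l).getLast (List.cons_ne_nil a l) = b := by
  induction h using Relation.ReflTransGen.head_induction_on with
  | refl => exact ⟨[], .singleton _, List.nodup_singleton _, rfl⟩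
  | @head a c hac _ ih =>
    obtain ⟨l, hchain, hnodup, hlast⟩ := ih
    by_cases ha : a ∈ c :: l
    · -- `a` is revisited: keep the path from its later occurrence
      obtain ⟨s, t, hst⟩ := List.append_of_mem ha
      have hsuffix : (a :: t) <:+ c :: l := hst ▸ List.suffix_append s _
      refine ⟨t, hchain.infix hsuffix.isInfix, hnodup.sublist hsuffix.sublist, ?_⟩
      rw [← hlast]
      simp [hst, List.getLast_append_of_ne_nil]
    · exact ⟨c :: l, .cons_cons hac hchain, List.nodup_cons.mpr ⟨ha, hnodup⟩,
        by rwa [List.getLast_cons_cons]⟩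

variable {X Y : Type} {E : X → Y → Prop} {C D : Finset (X × Y)}

structure IsMaximumMatching (E : X → Y → Prop) (C : Finset (X × Y)) : Prop where
  isMatching : IsMatching E C
  card_le : ∀ D, IsMatching E D → D.card ≤ C.card

def AltStep (E : X → Y → Prop) (C : Finset (X × Y)) (x x' : X) : Prop :=
  ∃ y, E x y ∧ (x, y) ∉ C ∧ (x', y) ∈ C

def Finset.rematch [DecidableEq X] [DecidableEq Y] (C : Finset (X × Y)) (u₁ u : X) (z : Y) :
    Finset (X × Y) :=
  insert (u, z) (C.erase (u₁, z))

theorem Finset.mem_rematch [DecidableEq X] [DecidableEq Y] {u u₁ : X} {z : Y} {p : X × Y} :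
    p ∈ C.rematch u₁ u z ↔ p = (u, z) ∨ p ≠ (u₁, z) ∧ p ∈ C := by
  simp [Finset.rematch]

namespace IsMatching

theorem mono (hC : IsMatching E C) (hD : D ⊆ C) : IsMatching E D :=
  ⟨fun p hp => hC.1 p (hD hp), fun p hp q hq => hC.2.1 p (hD hp) q (hD hq),
    fun p hp q hq => hC.2.2 p (hD hp) q (hD hq)⟩

theorem insert [DecidableEq X] [DecidableEq Y] {x : X} {y : Y} (hC : IsMatching E C)
    (hxy : E x y) (hx : ∀ y', (x, y') ∉ C) (hy : ∀ x', (x', y) ∉ C) :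
    IsMatching E (insert (x, y) C) := by
  obtain ⟨hE, h₁, h₂⟩ := hC
  refine ⟨?_, ?_, ?_⟩
  · simp only [Finset.mem_insert, forall_eq_or_imp]
    exact ⟨hxy, hE⟩
  · rintro ⟨a, b⟩ hp ⟨c, d⟩ hq (rfl : a = c)
    simp only [Finset.mem_insert, Prod.mk.injEq] at hp hq
    grind
  · rintro ⟨a, b⟩ hp ⟨c, d⟩ hq (rfl : b = d)
    simp only [Finset.mem_insert, Prod.mk.injEq] at hp hq
    grind

section rematch

variable [DecidableEq X] [DecidableEq Y] {u u₁ : X} {z : Y}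

theorem rematch (hC : IsMatching E C) (hu : ∀ y, (u, y) ∉ C) (huz : E u z)
    (hz : (u₁, z) ∈ C) : IsMatching E (C.rematch u₁ u z) :=
  (hC.mono (C.erase_subset _)).insert huz (fun y h => hu y (Finset.mem_of_mem_erase h))
    fun _ h => Finset.ne_of_mem_erase h (hC.2.2 _ (Finset.mem_of_mem_erase h) _ hz rfl)

theorem forall_notMem_rematch (hC : IsMatching E C) (hu : ∀ y, (u, y) ∉ C)
    (hz : (u₁, z) ∈ C) (y : Y) : (u₁, y) ∉ C.rematch u₁ u z := by
  rw [Finset.mem_rematch]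
  rintro (h | ⟨hne, hy⟩)
  · exact hu z ((Prod.mk.inj h).1 ▸ hz)
  · exact hne (hC.2.1 _ hy _ hz rfl)

theorem altStep_rematch (hC : IsMatching E C) (hz : (u₁, z) ∈ C) {c d : X}
    (hcd : AltStep E C c d) (hd : d ≠ u₁) : AltStep E (C.rematch u₁ u z) c d := by
  obtain ⟨w, hcw, hcwC, hdw⟩ := hcd
  refine ⟨w, hcw, ?_, Finset.mem_rematch.2 (.inr ⟨fun h => hd (Prod.mk.inj h).1, hdw⟩)⟩
  rw [Finset.mem_rematch]
  rintro (h | ⟨-, h⟩)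
  · -- `w = z` would force `d = u₁`
    obtain ⟨-, rfl⟩ := Prod.mk.inj h
    exact hd (Prod.mk.inj (hC.2.2 _ hdw _ hz rfl)).1
  · exact hcwC h

end rematch

theorem ncard_sep_matched_eq (hC : IsMatching E C) {S : Set X} {T : Set Y}
    (hST : ∀ p ∈ C, p.1 ∈ S ↔ p.2 ∈ T) :
    {x ∈ S | ∃ y, (x, y) ∈ C}.ncard = {y ∈ T | ∃ x, (x, y) ∈ C}.ncard := by
  set M : Set (X × Y) := {p | p ∈ C ∧ p.1 ∈ S}
  have hfst : {x ∈ S | ∃ y, (x, y) ∈ C} = Prod.fst '' M := by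
    ext x
    simp only [Set.mem_image, Prod.exists, exists_and_right, exists_eq_right, M]
    grind
  have hsnd : {y ∈ T | ∃ x, (x, y) ∈ C} = Prod.snd '' M := by
    ext y
    simp only [Set.mem_image, Prod.exists, exists_eq_right, M]
    grind
  have hfst_inj : Set.InjOn Prod.fst M := fun p hp q hq => hC.2.1 p hp.1 q hq.1
  have hsnd_inj : Set.InjOn Prod.snd M := fun p hp q hq => hC.2.2 p hp.1 q hq.1
  rw [hfst, hsnd, hfst_inj.ncard_image, hsnd_inj.ncard_image]

end IsMatching

namespace IsMaximumMatching

theorem exists_mem_of_forall_notMem {u : X} {y : Y} (hC : IsMaximumMatching E C)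
    (hu : ∀ y', (u, y') ∉ C) (huy : E u y) : ∃ x, (x, y) ∈ C := by
  classical
  by_contra! hy
  have := hC.card_le _ (hC.isMatching.insert huy hu hy)
  rw [Finset.card_insert_of_notMem (hu y)] at this
  omega

theorem rematch [DecidableEq X] [DecidableEq Y] {u u₁ : X} {z : Y} (hC : IsMaximumMatching E C)
    (hu : ∀ y, (u, y) ∉ C) (huz : E u z) (hz : (u₁, z) ∈ C) :
    IsMaximumMatching E (C.rematch u₁ u z) := by
  have hcard : (C.rematch u₁ u z).card = C.card := by
    rw [Finset.rematch, Finset.card_insert_of_notMem fun h => hu z (Finset.mem_of_mem_erase h),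
      Finset.card_erase_add_one hz]
  exact ⟨hC.isMatching.rematch hu huz hz, fun D hD => hcard ▸ hC.card_le D hD⟩

/-- No augmenting path (Berge). The path is shortened one edge at a time by rematching its first
`Y`-vertex to the free start. -/
theorem exists_mem_of_isChain_altStep (l : List X) {u : X} {y : Y} (hC : IsMaximumMatching E C)
    (hu : ∀ y', (u, y') ∉ C) (hchain : (u :: l).IsChain (AltStep E C)) (hnodup : (u :: l).Nodup)
    (hy : E ((u :: l).getLast (List.cons_ne_nil u l)) y) : ∃ x, (x, y) ∈ C := by
  classical
  induction l generalizing C u with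
  | nil => exact hC.exists_mem_of_forall_notMem hu hy
  | cons u₁ t ih =>
    obtain ⟨⟨z, huz, -, hz⟩, htail⟩ := List.isChain_cons_cons.mp hchain
    have hu₁t : u₁ ∉ t := (List.nodup_cons.mp (List.nodup_cons.mp hnodup).2).1
    have htail' : (u₁ :: t).IsChain (AltStep E (C.rematch u₁ u z)) :=
      htail.imp_of_mem_tail_imp fun _ d _ hd hcd =>
        hC.isMatching.altStep_rematch hz hcd fun h => hu₁t (h ▸ hd)
    obtain ⟨x, hx⟩ := ih (hC.rematch hu huz hz) (hC.isMatching.forall_notMem_rematch hu hz) htail'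
      (List.nodup_cons.mp hnodup).2 (by rwa [List.getLast_cons_cons] at hy)
    rcases Finset.mem_rematch.mp hx with h | ⟨-, h⟩
    · exact ⟨u₁, (Prod.mk.inj h).2 ▸ hz⟩
    · exact ⟨x, h⟩

theorem exists_reflTransGen_mem_of_adj {u x : X} {y : Y}
    (hC : IsMaximumMatching E C) (hu : ∀ y', (u, y') ∉ C)
    (hux : Relation.ReflTransGen (AltStep E C) u x) (hxy : E x y) :
    ∃ x', Relation.ReflTransGen (AltStep E C) u x' ∧ (x', y) ∈ C := by
  by_cases hxyC : (x, y) ∈ C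
  · exact ⟨x, hux, hxyC⟩
  obtain ⟨l, hchain, hnodup, hlast⟩ := hux.exists_isChain_nodup
  obtain ⟨x', hx'⟩ := hC.exists_mem_of_isChain_altStep l hu hchain hnodup (hlast ▸ hxy)
  exact ⟨x', hux.tail ⟨y, hxy, hxyC, hx'⟩, hx'⟩

end IsMaximumMatching

theorem alternating_reachable_set_properties_general {X Y : Type}
    [Fintype X]
    (E : X → Y → Prop) (B : Finset (X × Y))
    (hB : IsMatching E B)
    (hmax : ∀ B' : Finset (X × Y), IsMatching E B' → B'.card ≤ B.card)
    (hunsat : ∃ x : X, ∀ y : Y, (x, y) ∉ B)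
    -- the set of X-vertices unmatched by B
    (Xu : Set X) (hXu : Xu = {x : X | ∀ y : Y, (x, y) ∉ B})
    -- alternating step: from x, traverse a non-matching edge (x, y), then the
    -- matching edge (x', y) of B back to X
    (step : X → X → Prop)
    (hstep : step = fun x x' => ∃ y : Y, E x y ∧ (x, y) ∉ B ∧ (x', y) ∈ B)
    -- Xplus = Xu together with all X-vertices reachable from Xu by alternating paths
    (Xplus : Set X) (hXplus : Xplus = {x : X | ∃ u ∈ Xu, Relation.ReflTransGen step u x})
    -- Γ(Xplus), the set of neighbors of Xplus in Y
    (Γplus : Set Y) (hΓ : Γplus = {y : Y | ∃ x ∈ Xplus, E x y}) :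
    -- (1) every neighbor of Xplus is matched by B, via a matching edge whose
    -- X-endpoint lies in Xplus
    (∀ y ∈ Γplus, ∃ x ∈ Xplus, (x, y) ∈ B) ∧
    (Xplus ∩ {x : X | x ∉ Xu}).ncard = Γplus.ncard ∧
    Xplus.ncard = Xu.ncard + Γplus.ncard ∧
    Γplus.ncard < Xplus.ncard ∧
    -- (2) there are no edges of G between Xplus and Y \ Γ(Xplus)
    (∀ x ∈ Xplus, ∀ y : Y, E x y → y ∈ Γplus) ∧
    -- (3) the restriction of B to X \ Xplus perfectly matches X \ Xplus into
    -- a subset of Y \ Γ(Xplus)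
    (∀ x : X, x ∉ Xplus → ∃ y : Y, (x, y) ∈ B ∧ y ∉ Γplus) := by
  have hXu_sub : Xu ⊆ Xplus := hXplus ▸ fun u hu => ⟨u, hu, .refl⟩
  have hΓ_adj : ∀ x ∈ Xplus, ∀ y, E x y → y ∈ Γplus := hΓ ▸ fun x hx y hxy => ⟨x, hx, hxy⟩
  have hΓ_matched : ∀ y ∈ Γplus, ∃ x ∈ Xplus, (x, y) ∈ B := by
    subst hXu hstep hXplus hΓ
    rintro y ⟨x, ⟨u, hu, hux⟩, hxy⟩
    obtain ⟨x', hux', hx'⟩ :=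
      IsMaximumMatching.exists_reflTransGen_mem_of_adj ⟨hB, hmax⟩ hu hux hxy
    exact ⟨x', ⟨u, hu, hux'⟩, hx'⟩
  have hmem_iff : ∀ p ∈ B, p.1 ∈ Xplus ↔ p.2 ∈ Γplus := fun p hp =>
    ⟨fun h => hΓ_adj _ h _ (hB.1 p hp), fun h => by
      obtain ⟨x, hx, hxp⟩ := hΓ_matched _ h
      exact congrArg Prod.fst (hB.2.2 _ hxp _ hp rfl) ▸ hx⟩
  have hcard : (Xplus ∩ {x | x ∉ Xu}).ncard = Γplus.ncard := by
    have hXplus_matched : Xplus ∩ {x | x ∉ Xu} = {x ∈ Xplus | ∃ y, (x, y) ∈ B} := by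
      subst hXu
      ext x
      simp
    have hΓ_eq : {y ∈ Γplus | ∃ x, (x, y) ∈ B} = Γplus :=
      Set.sep_eq_self_iff_mem_true.mpr fun y hy => (hΓ_matched y hy).imp fun _ h => h.2
    rw [hXplus_matched, ← hΓ_eq]
    exact hB.ncard_sep_matched_eq hmem_iff
  have hsplit : Xplus.ncard = Xu.ncard + Γplus.ncard := by
    rw [← hcard, add_comm]
    exact (Set.ncard_sdiff_add_ncard_of_subset hXu_sub).symm
  have hXu_pos : 0 < Xu.ncard := (Set.ncard_pos (Set.toFinite _)).mpr (hXu ▸ hunsat)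
  refine ⟨hΓ_matched, hcard, hsplit, by omega, hΓ_adj, fun x hx => ?_⟩
  obtain ⟨y, hy⟩ : ∃ y, (x, y) ∈ B := by
    by_contra! h
    exact hx (hXu_sub (hXu ▸ h))
  exact ⟨y, hy, fun hyΓ => hx ((hmem_iff _ hy).mpr hyΓ)⟩

/-- for a maximum matching `B` of a finite bipartite graph `(X, Y, E)`
that does not saturate `X`, with `Xu` the unmatched `X`-vertices and `Xplus` the set
of `X`-vertices reachable from `Xu` by alternating paths, the stated structural
properties hold. -/
theorem alternating_reachable_set_properties {X Y : Type}
    [Fintype X] [Fintype Y] [DecidableEq X] [DecidableEq Y]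
    (E : X → Y → Prop) (B : Finset (X × Y))
    (hB : IsMatching E B)
    (hmax : ∀ B' : Finset (X × Y), IsMatching E B' → B'.card ≤ B.card)
    (hunsat : ∃ x : X, ∀ y : Y, (x, y) ∉ B)
    -- the set of X-vertices unmatched by B
    (Xu : Set X) (hXu : Xu = {x : X | ∀ y : Y, (x, y) ∉ B})
    -- alternating step: from x, traverse a non-matching edge (x, y), then the
    -- matching edge (x', y) of B back to X
    (step : X → X → Prop)
    (hstep : step = fun x x' => ∃ y : Y, E x y ∧ (x, y) ∉ B ∧ (x', y) ∈ B)
    -- Xplus = Xu together with all X-vertices reachable from Xu by alternating paths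
    (Xplus : Set X) (hXplus : Xplus = {x : X | ∃ u ∈ Xu, Relation.ReflTransGen step u x})
    -- Γ(Xplus), the set of neighbors of Xplus in Y
    (Γplus : Set Y) (hΓ : Γplus = {y : Y | ∃ x ∈ Xplus, E x y}) :
    -- (1) every neighbor of Xplus is matched by B, via a matching edge whose
    -- X-endpoint lies in Xplus
    (∀ y ∈ Γplus, ∃ x ∈ Xplus, (x, y) ∈ B) ∧
    (Xplus ∩ {x : X | x ∉ Xu}).ncard = Γplus.ncard ∧
    Xplus.ncard = Xu.ncard + Γplus.ncard ∧
    Γplus.ncard < Xplus.ncard ∧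
    -- (2) there are no edges of G between Xplus and Y \ Γ(Xplus)
    (∀ x ∈ Xplus, ∀ y : Y, E x y → y ∈ Γplus) ∧
    -- (3) the restriction of B to X \ Xplus perfectly matches X \ Xplus into
    -- a subset of Y \ Γ(Xplus)
    (∀ x : X, x ∉ Xplus → ∃ y : Y, (x, y) ∈ B ∧ y ∉ Γplus) :=
  alternating_reachable_set_properties_general E B hB hmax hunsat Xu hXu step hstep Xplus hXplus
    Γplus hΓ
end

section
/- Under the stated hypotheses on v_2, μ_2, (A_1, A_2, A_3), (A'_1, A'_2, A'_3), F_1, F_2, F_3, C_1, C_2, the following hold: (i) v_2(A_3) + v_2(C_2) ≥ (7/8)μ_2, and (ii) v_2(F_1) + v_2(F_2) + v_2(C_1) > (7/8)μ_2. -/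
namespace IsPartition

variable {ι : Type*} [DecidableEq ι] {n : ℕ} {S T : Finset ι} {P : Fin n → Finset ι}

lemma subset_s10 (hP : IsPartition n S P) (i : Fin n) : P i ⊆ S :=
  hP.2 ▸ Finset.subset_biUnion_of_mem P (Finset.mem_univ i)

lemma inter (hP : IsPartition n S P) (hT : T ⊆ S) :
    IsPartition n T fun i => P i ∩ T := by
  refine ⟨fun i j hij => (hP.1 i j hij).mono Finset.inter_subset_left Finset.inter_subset_left,
    ?_⟩
  rw [← Finset.biUnion_inter, hP.2, Finset.inter_eq_right.mpr hT]

lemma sum_eq_s10 (hP : IsPartition n S P) (v : ι → ℝ) : ∑ i, (P i).sum v = S.sum v := by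
  rw [← hP.2, Finset.sum_biUnion fun i _ j _ hij => hP.1 i j hij]

lemma sum_inter (hP : IsPartition n S P) (hT : T ⊆ S) (v : ι → ℝ) :
    ∑ i, (P i ∩ T).sum v = T.sum v :=
  (hP.inter hT).sum_eq_s10 v

lemma exists_sum_inter_le [NeZero n] (hP : IsPartition n S P) (hT : T ⊆ S) (v : ι → ℝ) :
    ∃ i, (P i ∩ T).sum v ≤ T.sum v / n := by
  obtain ⟨i, -, hi⟩ := Finset.exists_le_of_sum_le Finset.univ_nonempty
    (f := fun i => (P i ∩ T).sum v) (g := fun _ => T.sum v / n) (by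
      rw [hP.sum_inter hT, Finset.sum_const, Finset.card_univ, Fintype.card_fin, nsmul_eq_mul,
        mul_div_cancel₀ _ (NeZero.ne (n : ℝ))])
  exact ⟨i, hi⟩

lemma sum_add_le (hP : IsPartition n S P) {v : ι → ℝ} {c : ℝ} (hc : ∀ j, c ≤ (P j).sum v)
    (i : Fin n) : (P i).sum v + (n - 1) * c ≤ S.sum v := by
  rw [← hP.sum_eq_s10 v, ← Finset.add_sum_erase _ _ (Finset.mem_univ i)]
  gcongr
  calc ((n : ℝ) - 1) * c = ∑ _j ∈ Finset.univ.erase i, c := by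
        simp [Nat.cast_pred i.pos]
    _ ≤ _ := Finset.sum_le_sum fun j _ => hc j

lemma iInf_le_mms [NeZero n] (hP : IsPartition n S P) {v : ι → ℝ} (hv : ∀ j ∈ S, 0 ≤ v j) :
    ⨅ j, (P j).sum v ≤ mms n S v := by
  refine le_csSup ⟨S.sum v, ?_⟩ ⟨P, hP, rfl⟩
  rintro _ ⟨Q, hQ, rfl⟩
  exact (ciInf_le (Set.finite_range _).bddBelow 0).trans
    (Finset.sum_le_sum_of_subset_of_nonneg (hQ.subset_s10 0) fun j hj _ => hv j hj)

end IsPartition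

lemma min_sum_inter_sum_sdiff_le_mms_two {ι : Type*} [DecidableEq ι] (S B : Finset ι)
    {v : ι → ℝ} (hv : ∀ j ∈ S, 0 ≤ v j) :
    min ((S ∩ B).sum v) ((S \ B).sum v) ≤ mms 2 S v := by
  have hP : IsPartition 2 S ![S ∩ B, S \ B] := by
    refine ⟨fun i j hij => ?_, ?_⟩
    · fin_cases i <;> fin_cases j <;> simp at hij ⊢
      exacts [(Finset.disjoint_sdiff_inter S B).symm, Finset.disjoint_sdiff_inter S B]
    · simpa [Fin.univ_succ] using sup_inf_sdiff S B
  refine le_trans (le_ciInf fun j => ?_) (hP.iInf_le_mms hv)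
  fin_cases j
  exacts [min_le_left _ _, min_le_right _ _]

lemma seven_eighths_mul_le_sum_add_mms_two {ι : Type*} [DecidableEq ι] {M : Finset ι}
    {v : ι → ℝ} (hv : ∀ j ∈ M, 0 ≤ v j) {μ : ℝ} {A A' : Fin 3 → Finset ι}
    (hA : IsPartition 3 M A) (hA1 : (A 1).sum v < 7 / 8 * μ)
    (hA' : IsPartition 3 M A') (hμA' : ∀ i, μ ≤ (A' i).sum v)
    (hF : ∀ i, μ / 8 < (A' i ∩ A 2).sum v) :
    7 / 8 * μ ≤ (A 2).sum v + mms 2 (A 0) v := by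
  have hnonneg : ∀ T ⊆ M, 0 ≤ T.sum v := fun T hT => Finset.sum_nonneg fun j hj => hv j (hT hj)
  have hμ : 0 ≤ μ := by linarith [hnonneg _ (hA.subset_s10 1)]
  obtain ⟨a, ha⟩ := hA'.exists_sum_inter_le (hA.subset_s10 1) v
  push_cast at ha
  have hA'a := hA.sum_inter (hA'.subset_s10 a) v
  simp only [Fin.sum_univ_three, Finset.inter_comm (A 1), Finset.inter_comm (A 2)] at hA'a
  have hothers := (hA'.inter (hA.subset_s10 2)).sum_add_le (fun j => (hF j).le) a
  have hrest := hA'.sum_add_le hμA' a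
  push_cast at hothers hrest
  have hA0 := hA.sum_eq_s10 v
  simp only [Fin.sum_univ_three] at hA0
  have hsplit := Finset.sum_inter_add_sum_sdiff (A 0) (A' a) v
  have hA1a := hnonneg _ ((hA'.subset_s10 a).trans' Finset.inter_subset_left : A' a ∩ A 1 ⊆ M)
  have hA2a := hnonneg _ ((hA'.subset_s10 a).trans' Finset.inter_subset_left : A' a ∩ A 2 ⊆ M)
  have hmms := min_sum_inter_sum_sdiff_le_mms_two (A 0) (A' a) fun j hj => hv j (hA.subset_s10 0 hj)
  have hsides : 7 / 8 * μ - (A 2).sum v ≤ min ((A 0 ∩ A' a).sum v) ((A 0 \ A' a).sum v) :=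
    le_min (by linarith [hμA' a]) (by linarith)
  linarith

theorem claim_sums_seven_eighths_general {ι : Type*} [DecidableEq ι]
    (M : Finset ι) (v : ι → ℝ) (hv : ∀ j ∈ M, 0 ≤ v j)
    (μ : ℝ)
    -- (A 0, A 1, A 2) is a partition of M whose last two bundles are small
    (A : Fin 3 → Finset ι) (hA : IsPartition 3 M A)
    (hA2 : (A 1).sum v < 7 / 8 * μ) (hA3 : (A 2).sum v < 7 / 8 * μ)
    -- (A' 0, A' 1, A' 2) is a 3-maximin partition of M w.r.t. v
    (A' : Fin 3 → Finset ι) (hA' : IsPartition 3 M A')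
    (hA'opt : min ((A' 0).sum v) (min ((A' 1).sum v) ((A' 2).sum v)) = μ)
    -- F i = A' i ∩ A 2, indexed so that v(F 0) ≤ v(F 1) ≤ v(F 2), and v(F 0) > μ/8
    (F : Fin 3 → Finset ι) (hF : ∀ i : Fin 3, F i = A' i ∩ A 2)
    (hF01 : (F 0).sum v ≤ (F 1).sum v) (hF12 : (F 1).sum v ≤ (F 2).sum v)
    (hF0 : μ / 8 < (F 0).sum v)
    -- (C₁, C₂) is a 2-maximin partition of A 0 w.r.t. v, with v(C₁) ≥ v(C₂)
    (C₁ C₂ : Finset ι) (hC : Disjoint C₁ C₂) (hCu : C₁ ∪ C₂ = A 0)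
    (hCopt : min (C₁.sum v) (C₂.sum v) = mms 2 (A 0) v)
    (hC12 : C₂.sum v ≤ C₁.sum v) :
    7 / 8 * μ ≤ (A 2).sum v + C₂.sum v ∧
      7 / 8 * μ < (F 0).sum v + (F 1).sum v + C₁.sum v := by
  have hμA' : ∀ i, μ ≤ (A' i).sum v := by
    intro i; fin_cases i <;> simp [← hA'opt]
  have hFμ : ∀ i, μ / 8 < (A' i ∩ A 2).sum v := by
    intro i; rw [← hF]; fin_cases i <;> simp only [Fin.zero_eta, Fin.mk_one, Fin.reduceFinMk] <;>
      linarith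
  have hC₂ : C₂.sum v = mms 2 (A 0) v := by rw [← hCopt, min_eq_right hC12]
  refine ⟨hC₂ ▸ seven_eighths_mul_le_sum_add_mms_two hv hA hA2 hA' hμA' hFμ, ?_⟩
  have hA0 : C₁.sum v + C₂.sum v = (A 0).sum v := by rw [← hCu, Finset.sum_union hC]
  have hMA := hA.sum_eq_s10 v
  have hMA' := hA'.sum_eq_s10 v
  simp only [Fin.sum_univ_three] at hMA hMA'
  linarith [hμA' 0, hμA' 1, hμA' 2]

/-- under the stated hypotheses,
(i) `v₂(A₃) + v₂(C₂) ≥ (7/8)μ₂` and (ii) `v₂(F₁) + v₂(F₂) + v₂(C₁) > (7/8)μ₂`. -/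
theorem claim_sums_seven_eighths {ι : Type*} [DecidableEq ι]
    (M : Finset ι) (v : ι → ℝ) (hv : ∀ j ∈ M, 0 ≤ v j)
    (μ : ℝ) (hμ : μ = mms 3 M v)
    -- every single good has value less than (7/8)μ₂
    (hitems : ∀ j ∈ M, v j < 7 / 8 * μ)
    -- (A 0, A 1, A 2) is a partition of M whose last two bundles are small
    (A : Fin 3 → Finset ι) (hA : IsPartition 3 M A)
    (hA2 : (A 1).sum v < 7 / 8 * μ) (hA3 : (A 2).sum v < 7 / 8 * μ)
    -- (A' 0, A' 1, A' 2) is a 3-maximin partition of M w.r.t. v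
    (A' : Fin 3 → Finset ι) (hA' : IsPartition 3 M A')
    (hA'opt : min ((A' 0).sum v) (min ((A' 1).sum v) ((A' 2).sum v)) = μ)
    -- F i = A' i ∩ A 2, indexed so that v(F 0) ≤ v(F 1) ≤ v(F 2), and v(F 0) > μ/8
    (F : Fin 3 → Finset ι) (hF : ∀ i : Fin 3, F i = A' i ∩ A 2)
    (hF01 : (F 0).sum v ≤ (F 1).sum v) (hF12 : (F 1).sum v ≤ (F 2).sum v)
    (hF0 : μ / 8 < (F 0).sum v)
    -- (C₁, C₂) is a 2-maximin partition of A 0 w.r.t. v, with v(C₁) ≥ v(C₂)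
    (C₁ C₂ : Finset ι) (hC : Disjoint C₁ C₂) (hCu : C₁ ∪ C₂ = A 0)
    (hCopt : min (C₁.sum v) (C₂.sum v) = mms 2 (A 0) v)
    (hC12 : C₂.sum v ≤ C₁.sum v) :
    7 / 8 * μ ≤ (A 2).sum v + C₂.sum v ∧
      7 / 8 * μ < (F 0).sum v + (F 1).sum v + C₁.sum v :=
  claim_sums_seven_eighths_general M v hv μ A hA hA2 hA3 A' hA' hA'opt F hF hF01 hF12 hF0 C₁ C₂ hC
    hCu hCopt hC12
end

section
/- Let N be a set of n agents with additive valuations v_1, …, v_n over a finite set M = {1, …, m} of goods, and let ρ ∈ (0, 1]. For each agent i, let σ_i be a permutation of M sorting her values in decreasing order (v_i(σ_i(j)) ≥ v_i(σ_i(j+1)) for all j), and let v_i^↑ be the additive valuation defined by v_i^↑({j}) = v_i({σ_i(j)}). If there exists a partition (T_1, …, T_n) of M with v_i^↑(T_i) ≥ ρ · μ_i(n, M) for every agent i, then there exists a partition (T'_1, …, T'_n) of M with v_i(T'_i) ≥ ρ · μ_i(n, M) for every agent i. -/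
/-!
Call the goods of the sorted instance positions and let `owner j` be the agent whose bundle
contains position `j`: there she receives her `(j + 1)`-st most valuable good. Position `j`
accepts every good its owner values at least that much, and there are at least `j + 1` such
goods. Any `k` positions, the largest of which is some `j ≥ k - 1`, thus accept at least `k`
goods together, so Hall's theorem gives a bijection `p` sending each position to an accepted
good. Replacing every bundle by its image under `p` can only increase its owner's value.
-/

open Finset

namespace IsPartition

variable {ι κ : Type*} [DecidableEq ι] [DecidableEq κ] {n : ℕ} {S : Finset ι}
  {P : Fin n → Finset ι}

theorem exists_mem (hP : IsPartition n S P) {x : ι} (hx : x ∈ S) : ∃ i, x ∈ P i := by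
  rw [← hP.2] at hx
  simpa using hx

theorem eq_of_mem_of_mem (hP : IsPartition n S P) {x : ι} {i i' : Fin n} (hi : x ∈ P i)
    (hi' : x ∈ P i') : i = i' := by
  by_contra h
  exact disjoint_left.mp (hP.1 i i' h) hi hi'

theorem map (hP : IsPartition n S P) (e : ι ↪ κ) :
    IsPartition n (S.map e) fun i => (P i).map e := by
  refine ⟨fun i i' h => (disjoint_map e).mpr (hP.1 i i' h), ?_⟩
  simp only [← hP.2, map_eq_image, biUnion_image]

end IsPartition

theorem exists_injective_mem_of_succ_le_card {α : Type*} [DecidableEq α] {m : ℕ}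
    (t : Fin m → Finset α) (ht : ∀ j : Fin m, (j : ℕ) + 1 ≤ #(t j)) :
    ∃ f : Fin m → α, Function.Injective f ∧ ∀ j, f j ∈ t j := by
  refine (all_card_le_biUnion_card_iff_exists_injective t).mp fun s => ?_
  rcases s.eq_empty_or_nonempty with rfl | hs
  · simp
  · calc #s ≤ #(Iic (s.max' hs)) := card_le_card fun j hj => mem_Iic.mpr (s.le_max' j hj)
      _ = s.max' hs + 1 := Fin.card_Iic _
      _ ≤ #(t (s.max' hs)) := ht _
      _ ≤ #(s.biUnion t) := card_le_card (subset_biUnion_of_mem t (s.max'_mem hs))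

theorem succ_le_card_filter_le_of_antitone {α β : Type*} [Fintype α] [Preorder β]
    [DecidableLE β] {m : ℕ} (u : α → β) (σ : Fin m ≃ α) (hσ : Antitone fun j => u (σ j))
    (j : Fin m) : (j : ℕ) + 1 ≤ #{g | u (σ j) ≤ u g} := by
  calc (j : ℕ) + 1 = #((Iic j).map σ.toEmbedding) := by rw [card_map, Fin.card_Iic]
    _ ≤ #{g | u (σ j) ≤ u g} := card_le_card fun g hg => by
      obtain ⟨l, hl, rfl⟩ := mem_map.mp hg
      simpa using hσ (mem_Iic.mp hl)

theorem mms_fully_correlated_reduction_general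
    (n m : ℕ)
    (v : Fin n → Fin m → ℝ)
    (ρ : ℝ)
    (σ : Fin n → Equiv.Perm (Fin m))
    (hσ : ∀ i : Fin n, Antitone fun j => v i (σ i j))
    (T : Fin n → Finset (Fin m)) (hT : IsPartition n Finset.univ T)
    (hTval : ∀ i : Fin n, ρ * mms n Finset.univ (v i) ≤ (T i).sum fun j => v i (σ i j)) :
    ∃ T' : Fin n → Finset (Fin m), IsPartition n Finset.univ T' ∧
      ∀ i : Fin n, ρ * mms n Finset.univ (v i) ≤ (T' i).sum (v i) := by
  choose owner h_owner using fun j : Fin m => hT.exists_mem (mem_univ j)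
  obtain ⟨p, hp_inj, hp⟩ := exists_injective_mem_of_succ_le_card
    (fun j => {g | v (owner j) (σ (owner j) j) ≤ v (owner j) g})
    fun j => succ_le_card_filter_le_of_antitone _ (σ (owner j)) (hσ (owner j)) j
  let e : Equiv.Perm (Fin m) := .ofBijective p hp_inj.bijective_of_finite
  refine ⟨fun i => (T i).map e.toEmbedding, by simpa using hT.map e.toEmbedding, fun i => ?_⟩
  calc ρ * mms n univ (v i) ≤ ∑ j ∈ T i, v i (σ i j) := hTval i
    _ ≤ ∑ j ∈ T i, v i (p j) := sum_le_sum fun j hj => by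
      obtain rfl := hT.eq_of_mem_of_mem (h_owner j) hj
      simpa using hp j
    _ = ∑ g ∈ (T i).map e.toEmbedding, v i g := (sum_map (T i) e.toEmbedding (v i)).symm

/-- if `σ i` sorts the values of agent `i` in decreasing order and the
sorted valuations `v_i^↑ = v_i ∘ σ_i` admit a `ρ`-approximate maximin share
allocation, then so do the original valuations. -/
theorem mms_fully_correlated_reduction
    (n m : ℕ) (hn : 1 ≤ n)
    (v : Fin n → Fin m → ℝ) (hv : ∀ i j, 0 ≤ v i j)
    (ρ : ℝ) (hρ0 : 0 < ρ) (hρ1 : ρ ≤ 1)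
    (σ : Fin n → Equiv.Perm (Fin m))
    (hσ : ∀ i : Fin n, Antitone fun j => v i (σ i j))
    (T : Fin n → Finset (Fin m)) (hT : IsPartition n Finset.univ T)
    (hTval : ∀ i : Fin n, ρ * mms n Finset.univ (v i) ≤ (T i).sum fun j => v i (σ i j)) :
    ∃ T' : Fin n → Finset (Fin m), IsPartition n Finset.univ T' ∧
      ∀ i : Fin n, ρ * mms n Finset.univ (v i) ≤ (T' i).sum (v i) :=
  mms_fully_correlated_reduction_general n m v ρ σ hσ T hT hTval
end
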